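/- arXiv:1803.08777 — 5 statements merged into one kernel-verified Lean document; each statement's English description precedes it below -/
import Mathlib

section
/- Let f ∈ ℝ^n and k ≥ 1 an integer. Define Err_k(f)₂ = min over k-sparse vectors y ∈ ℝ^n of ‖f − y‖₂. Then Err_k(f)₂ ≤ k^{-1/2} ‖f‖₁. -/
/-!
Keep exactly the entries that are large compared with the average, i.e. those with
`k * |f i| > ‖f‖₁`. By a Markov-type count there are at most `k` of them, so this is a `k`-sparse
approximation of `f`. Every discarded entry satisfies `|f i| ≤ ‖f‖₁ / k`, hence the squared error
is `∑ |f i|² ≤ (‖f‖₁ / k) * ∑ |f i| ≤ ‖f‖₁² / k`.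
-/

open Finset

theorem card_filter_sum_lt_mul_le {ι : Type*} (s : Finset ι) (g : ι → ℝ)
    (hg : ∀ i ∈ s, 0 ≤ g i) (k : ℕ) :
    #{i ∈ s | ∑ j ∈ s, g j < k * g i} ≤ k := by
  set A := ∑ j ∈ s, g j
  set T := {i ∈ s | A < k * g i}
  rcases T.eq_empty_or_nonempty with hT | ⟨i, hi⟩
  · simp [hT]
  obtain ⟨his, hlt⟩ := mem_filter.mp hi
  have hgi : 0 < g i := pos_of_mul_pos_right ((sum_nonneg hg).trans_lt hlt) k.cast_nonneg
  have hA : 0 < A := hgi.trans_le (single_le_sum hg his)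
  have hcard : (#T : ℝ) * A ≤ k * A :=
    calc (#T : ℝ) * A = #T • A := (nsmul_eq_mul _ _).symm
      _ ≤ ∑ j ∈ T, k * g j := card_nsmul_le_sum _ _ _ fun j hj => (mem_filter.mp hj).2.le
      _ = k * ∑ j ∈ T, g j := (mul_sum _ _ _).symm
      _ ≤ k * A := by
        gcongr
        exact sum_le_sum_of_subset_of_nonneg (filter_subset _ _) fun j hj _ => hg j hj
  exact_mod_cast le_of_mul_le_mul_right hcard hA

theorem sum_sq_le_mul_sum_abs {ι : Type*} (s : Finset ι) (f : ι → ℝ) {t : ℝ}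
    (h : ∀ i ∈ s, |f i| ≤ t) : ∑ i ∈ s, f i ^ 2 ≤ t * ∑ i ∈ s, |f i| := by
  rw [mul_sum]
  refine sum_le_sum fun i hi => ?_
  rw [← sq_abs, sq]
  exact mul_le_mul_of_nonneg_right (h i hi) (abs_nonneg _)

theorem exists_sparse_sum_sq_sub_le {ι : Type*} [Fintype ι] (f : ι → ℝ) {k : ℕ} (hk : 1 ≤ k) :
    ∃ y : ι → ℝ, (Function.support y).ncard ≤ k ∧
      ∑ i, (f i - y i) ^ 2 ≤ (∑ i, |f i|) ^ 2 / k := by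
  set A := ∑ i, |f i|
  have hk0 : (0 : ℝ) < k := by exact_mod_cast hk
  refine ⟨fun i => if A < k * |f i| then f i else 0, ?_, ?_⟩
  · calc _ ≤ (({i | A < k * |f i|} : Finset ι) : Set ι).ncard :=
          Set.ncard_le_ncard fun i hi => by by_contra h; simp_all
      _ ≤ k := (Set.ncard_coe_finset _).trans_le <|
          card_filter_sum_lt_mul_le _ _ (fun i _ => abs_nonneg _) k
  calc ∑ i, (f i - if A < k * |f i| then f i else 0) ^ 2
        = ∑ i with ¬ A < k * |f i|, f i ^ 2 := by
        rw [sum_filter]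
        refine sum_congr rfl fun i _ => ?_
        split_ifs <;> simp
    _ ≤ A / k * ∑ i with ¬ A < k * |f i|, |f i| :=
        sum_sq_le_mul_sum_abs _ _ fun i hi => by
          rw [le_div_iff₀ hk0]; linarith [(mem_filter.mp hi).2]
    _ ≤ A / k * A := by
        gcongr
        exact sum_le_sum_of_subset_of_nonneg (filter_subset _ _) fun i _ _ => abs_nonneg _
    _ = A ^ 2 / k := by ring

/-- `Err_k(f)₂ ≤ k^{-1/2} ‖f‖₁`, where `Err_k(f)₂` is the minimum `ℓ₂` distance
from `f` to a `k`-sparse vector. -/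
theorem stmt_4 (n k : ℕ) (hk : 1 ≤ k) (f : Fin n → ℝ) :
    sInf {x : ℝ | ∃ y : Fin n → ℝ, (Function.support y).ncard ≤ k ∧
        x = Real.sqrt (∑ i, (f i - y i) ^ 2)}
      ≤ (k : ℝ) ^ (-(1/2 : ℝ)) * ∑ i, |f i| := by
  obtain ⟨y, hsparse, herr⟩ := exists_sparse_sum_sq_sub_le f hk
  refine (csInf_le ⟨0, ?_⟩ (a := √(∑ i, (f i - y i) ^ 2)) ?_).trans ?_
  · rintro _ ⟨z, _, rfl⟩
    positivity
  · exact ⟨y, hsparse, rfl⟩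
  have hA : 0 ≤ ∑ i, |f i| := sum_nonneg fun i _ => abs_nonneg _
  calc √(∑ i, (f i - y i) ^ 2) ≤ √((∑ i, |f i|) ^ 2 / k) := Real.sqrt_le_sqrt herr
    _ = (k : ℝ) ^ (-(1/2 : ℝ)) * ∑ i, |f i| := by
        rw [Real.sqrt_div (sq_nonneg _), Real.sqrt_sq hA, Real.rpow_neg k.cast_nonneg,
          ← Real.sqrt_eq_rpow, div_eq_inv_mul]
end

section
/- Let f, y ∈ ℝ^n, k ≥ 1, and E ≥ 0 satisfy |y_i − f_i| ≤ E for all i ∈ [n]. Let ŷ be the best k-sparse approximation to y (the vector keeping the k largest-magnitude coordinates of y and zeroing the rest). Then Err_k(f)₂ ≤ ‖f − ŷ‖₂ ≤ 5(√k · E + Err_k(f)₂), where Err_k(f)₂ = min over k-sparse z of ‖f − z‖₂. -/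
/-!
Fix a `k`-sparse `z` with support `B`. On `A`, `ŷ` is within `E` of `f` coordinatewise, which costs
`k E²`. Off `A`, the mass of `f` on `Bᶜ` is at most `‖f - z‖²`, and the mass on `B \ A` is controlled
by an exchange argument: every `i ∈ B \ A` lost against each `j ∈ A \ B` in the selection, so
`|y i| ≤ |y j|` and hence `|f i| ≤ |f j| + 2E`, while `#(B \ A) ≤ #(A \ B)` and `A \ B ⊆ Bᶜ`.
Altogether `‖f - ŷ‖² ≤ 9 k E² + 3 ‖f - z‖²`, i.e. `‖f - ŷ‖ ≤ 3 √k E + 2 ‖f - z‖`, and taking the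
infimum over `z` gives the upper bound. The lower bound holds because `ŷ` is itself `k`-sparse.
-/

open Finset

section

variable {ι : Type*}

/-- Each `g i ^ 2`, `i ∈ P`, is at most `2 m² + 2 c²` for `m` the smallest `|g j|`, `j ∈ Q`,
and `Q` has at least as many terms, each at least `m²`. -/
lemma sum_sq_le_two_mul_sum_sq_add_of_abs_le_add {P Q : Finset ι} (hPQ : #P ≤ #Q)
    {g : ι → ℝ} {c : ℝ} (h : ∀ i ∈ P, ∀ j ∈ Q, |g i| ≤ |g j| + c) :
    ∑ i ∈ P, g i ^ 2 ≤ 2 * ∑ j ∈ Q, g j ^ 2 + 2 * #P * c ^ 2 := by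
  rcases Q.eq_empty_or_nonempty with rfl | hQ
  · simp [card_eq_zero.mp (Nat.le_zero.mp hPQ)]
  obtain ⟨j₀, hj₀, hmin⟩ := Q.exists_min_image (|g ·|) hQ
  have hP : ∑ i ∈ P, g i ^ 2 ≤ #P * (2 * g j₀ ^ 2 + 2 * c ^ 2) := by
    rw [← nsmul_eq_mul]
    refine sum_le_card_nsmul _ _ _ fun i hi => ?_
    have := h i hi j₀ hj₀
    nlinarith [abs_nonneg (g i), sq_abs (g i), sq_abs (g j₀), sq_nonneg (|g j₀| - c)]
  have hQ : #Q * g j₀ ^ 2 ≤ ∑ j ∈ Q, g j ^ 2 := by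
    rw [← nsmul_eq_mul]
    refine card_nsmul_le_sum _ _ _ fun j hj => ?_
    simpa only [sq_abs] using pow_le_pow_left₀ (abs_nonneg _) (hmin j hj) 2
  have hcard : (#P : ℝ) ≤ #Q := by exact_mod_cast hPQ
  nlinarith [sq_nonneg (g j₀)]

variable [Fintype ι] [DecidableEq ι]

lemma sum_compl_sq_le_of_top {f y : ι → ℝ} {E : ℝ} (herr : ∀ i, |y i - f i| ≤ E)
    {A : Finset ι} (htop : ∀ i ∈ A, ∀ j ∉ A, |y j| ≤ |y i|) {B : Finset ι} (hBA : #B ≤ #A) :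
    ∑ i ∈ Aᶜ, f i ^ 2 ≤ 3 * ∑ i ∈ Bᶜ, f i ^ 2 + 8 * #B * E ^ 2 := by
  have hswap : ∀ i ∈ B \ A, ∀ j ∈ A \ B, |f i| ≤ |f j| + 2 * E := by
    intro i hi j hj
    have hy := htop j (mem_sdiff.1 hj).1 i (mem_sdiff.1 hi).2
    have hfi := abs_sub_abs_le_abs_sub (f i) (y i)
    have hyj := abs_sub_abs_le_abs_sub (y j) (f j)
    linarith [herr i, herr j, abs_sub_comm (f i) (y i)]
  have hBA' : ∑ i ∈ B \ A, f i ^ 2 ≤ 2 * ∑ i ∈ Bᶜ, f i ^ 2 + 8 * #B * E ^ 2 := by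
    have hle := sum_sq_le_two_mul_sum_sq_add_of_abs_le_add
      (card_sdiff_le_card_sdiff_iff.2 hBA) hswap
    have hsub : ∑ i ∈ A \ B, f i ^ 2 ≤ ∑ i ∈ Bᶜ, f i ^ 2 :=
      sum_le_sum_of_subset_of_nonneg (fun i hi => mem_compl.2 (mem_sdiff.1 hi).2)
        fun i _ _ => sq_nonneg _
    have hcard : (#(B \ A) : ℝ) ≤ #B := by exact_mod_cast card_le_card sdiff_subset
    nlinarith [sq_nonneg E]
  have hsplit : ∑ i ∈ Aᶜ, f i ^ 2 ≤ ∑ i ∈ B \ A, f i ^ 2 + ∑ i ∈ Bᶜ, f i ^ 2 := by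
    have hinter : Aᶜ ∩ B = B \ A := by ext; simp [and_comm]
    rw [← sum_inter_add_sum_sdiff Aᶜ B, hinter]
    exact add_le_add_right (sum_le_sum_of_subset_of_nonneg (fun i hi => mem_compl.2
      (mem_sdiff.1 hi).2) fun i _ _ => sq_nonneg _) _
  linarith

lemma sum_sq_sub_le_of_top {f y : ι → ℝ} {E : ℝ} (herr : ∀ i, |y i - f i| ≤ E)
    {A : Finset ι} (htop : ∀ i ∈ A, ∀ j ∉ A, |y j| ≤ |y i|)
    {yhat : ι → ℝ} (hyhat : ∀ i, yhat i = if i ∈ A then y i else 0)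
    {z : ι → ℝ} (hz : (Function.support z).ncard ≤ #A) :
    ∑ i, (f i - yhat i) ^ 2 ≤ 9 * #A * E ^ 2 + 3 * ∑ i, (f i - z i) ^ 2 := by
  classical
  set B := (Function.support z).toFinset
  have hBA : #B ≤ #A := by rwa [← Set.ncard_eq_toFinset_card']
  have hhead : ∑ i ∈ A, (f i - y i) ^ 2 ≤ #A * E ^ 2 := by
    rw [← nsmul_eq_mul]
    refine sum_le_card_nsmul _ _ _ fun i _ => ?_
    simpa only [sq_abs, abs_sub_comm] using pow_le_pow_left₀ (abs_nonneg _) (herr i) 2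
  have htail : ∑ i ∈ Bᶜ, f i ^ 2 ≤ ∑ i, (f i - z i) ^ 2 := by
    calc ∑ i ∈ Bᶜ, f i ^ 2 = ∑ i ∈ Bᶜ, (f i - z i) ^ 2 :=
          sum_congr rfl fun i hi => by simp_all [B]
      _ ≤ ∑ i, (f i - z i) ^ 2 :=
          sum_le_sum_of_subset_of_nonneg (subset_univ _) fun i _ _ => sq_nonneg _
  have hsplit : ∑ i, (f i - yhat i) ^ 2 = ∑ i ∈ A, (f i - y i) ^ 2 + ∑ i ∈ Aᶜ, f i ^ 2 := by
    rw [← sum_add_sum_compl A]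
    congr 1 <;> refine sum_congr rfl fun i hi => ?_ <;> simp_all
  have hcard : (#B : ℝ) ≤ #A := by exact_mod_cast hBA
  nlinarith [sum_compl_sq_le_of_top herr htop hBA, sq_nonneg E]

lemma sqrt_sum_sq_sub_le_of_top {f y : ι → ℝ} {E : ℝ} (hE : 0 ≤ E)
    (herr : ∀ i, |y i - f i| ≤ E)
    {A : Finset ι} (htop : ∀ i ∈ A, ∀ j ∉ A, |y j| ≤ |y i|)
    {yhat : ι → ℝ} (hyhat : ∀ i, yhat i = if i ∈ A then y i else 0)
    {z : ι → ℝ} (hz : (Function.support z).ncard ≤ #A) :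
    √(∑ i, (f i - yhat i) ^ 2) ≤ 3 * (√(#A : ℝ) * E) + 2 * √(∑ i, (f i - z i) ^ 2) := by
  have hsq := sum_sq_sub_le_of_top (f := f) herr htop hyhat hz
  set D := √(∑ i, (f i - z i) ^ 2)
  have hD : D ^ 2 = ∑ i, (f i - z i) ^ 2 := Real.sq_sqrt (by positivity)
  have hA : √(#A : ℝ) ^ 2 = #A := Real.sq_sqrt (Nat.cast_nonneg _)
  have hAE : 0 ≤ √(#A : ℝ) * E := by positivity
  rw [Real.sqrt_le_iff]
  exact ⟨by positivity, by nlinarith [mul_nonneg hAE (Real.sqrt_nonneg (∑ i, (f i - z i) ^ 2))]⟩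

end

theorem stmt_5_general (n k : ℕ) (f y : Fin n → ℝ) (E : ℝ) (hE : 0 ≤ E)
    (herr : ∀ i, |y i - f i| ≤ E)
    (A : Finset (Fin n)) (hAcard : A.card = min k n)
    (htop : ∀ i ∈ A, ∀ j ∉ A, |y j| ≤ |y i|)
    (yhat : Fin n → ℝ) (hyhat : ∀ i, yhat i = if i ∈ A then y i else 0) :
    sInf {x : ℝ | ∃ z : Fin n → ℝ, (Function.support z).ncard ≤ k ∧
        x = Real.sqrt (∑ i, (f i - z i) ^ 2)} ≤ Real.sqrt (∑ i, (f i - yhat i) ^ 2) ∧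
    Real.sqrt (∑ i, (f i - yhat i) ^ 2) ≤
      5 * (Real.sqrt k * E +
        sInf {x : ℝ | ∃ z : Fin n → ℝ, (Function.support z).ncard ≤ k ∧
          x = Real.sqrt (∑ i, (f i - z i) ^ 2)}) := by
  set S := {x : ℝ | ∃ z : Fin n → ℝ, (Function.support z).ncard ≤ k ∧
    x = Real.sqrt (∑ i, (f i - z i) ^ 2)}
  have hAk : #A ≤ k := hAcard ▸ min_le_left k n
  have hyhat_mem : √(∑ i, (f i - yhat i) ^ 2) ∈ S := by
    have hsupp : Function.support yhat ⊆ A :=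
      Function.support_subset_iff'.2 fun i hi => by rw [hyhat, if_neg (mt mem_coe.2 hi)]
    refine ⟨yhat, ?_, rfl⟩
    calc (Function.support yhat).ncard ≤ (A : Set (Fin n)).ncard :=
          Set.ncard_le_ncard hsupp A.finite_toSet
      _ ≤ k := by rwa [Set.ncard_coe_finset]
  have hS_nonneg : ∀ x ∈ S, 0 ≤ x := by rintro _ ⟨z, -, rfl⟩; positivity
  have hbound : ∀ x ∈ S, √(∑ i, (f i - yhat i) ^ 2) ≤ 3 * (√(k : ℝ) * E) + 2 * x := by
    rintro _ ⟨z, hz, rfl⟩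
    have hzA : (Function.support z).ncard ≤ #A := by
      rw [hAcard]
      exact le_min hz ((Set.ncard_le_card _).trans (Nat.card_fin n).le)
    refine (sqrt_sum_sq_sub_le_of_top hE herr htop hyhat hzA).trans ?_
    gcongr
  refine ⟨csInf_le ⟨0, hS_nonneg⟩ hyhat_mem, ?_⟩
  have hinf : (√(∑ i, (f i - yhat i) ^ 2) - 3 * (√(k : ℝ) * E)) / 2 ≤ sInf S :=
    le_csInf ⟨_, hyhat_mem⟩ fun x hx => by linarith [hbound x hx]
  have hinf_nonneg := Real.sInf_nonneg hS_nonneg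
  have hkE : 0 ≤ √(k : ℝ) * E := by positivity
  linarith

/-- If `|y i - f i| ≤ E` for all `i` and `ŷ` keeps the `k` largest-magnitude coordinates of `y`
(zeroing the rest), then `Err_k(f)₂ ≤ ‖f - ŷ‖₂ ≤ 5(√k E + Err_k(f)₂)`. -/
theorem stmt_5 (n k : ℕ) (hk : 1 ≤ k) (f y : Fin n → ℝ) (E : ℝ) (hE : 0 ≤ E)
    (herr : ∀ i, |y i - f i| ≤ E)
    (A : Finset (Fin n)) (hAcard : A.card = min k n)
    (htop : ∀ i ∈ A, ∀ j ∉ A, |y j| ≤ |y i|)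
    (yhat : Fin n → ℝ) (hyhat : ∀ i, yhat i = if i ∈ A then y i else 0) :
    sInf {x : ℝ | ∃ z : Fin n → ℝ, (Function.support z).ncard ≤ k ∧
        x = Real.sqrt (∑ i, (f i - z i) ^ 2)} ≤ Real.sqrt (∑ i, (f i - yhat i) ^ 2) ∧
    Real.sqrt (∑ i, (f i - yhat i) ^ 2) ≤
      5 * (Real.sqrt k * E +
        sInf {x : ℝ | ∃ z : Fin n → ℝ, (Function.support z).ncard ≤ k ∧
          x = Real.sqrt (∑ i, (f i - z i) ^ 2)}) :=
  stmt_5_general n k f y E hE herr A hAcard htop yhat hyhat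
end

section
/- Let f ∈ ℝ^n be a fixed vector, let k ≥ 1, let h : [n] → [k] be 2-wise independent and g : [n] → {−1, +1} be 4-wise independent, with h and g independent. Define R ∈ ℝ^k by R_j = Σ_{i : h(i)=j} g(i) f_i. Then E[ Σ_{j=1}^k R_j² ] = ‖f‖₂², and Var( Σ_{j=1}^k R_j² ) = 2(‖f‖₂⁴ − ‖f‖₄⁴)/k. -/
/-!
Write `s i = ±1` for the signs and `A a b = f a * f b * [h a = h b]`, so that
`Σ_j R_j² = sᵀ A s`. Since `h` and `g` are independent, we may fix `h` and average over the
signs first. For any symmetric `A` and 4-wise independent signs, `E[sᵀ A s] = tr A` and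
`E[(sᵀ A s)²] = (tr A)² + 2 Σ_{a ≠ b} (A a b)²`, because `E[s a * s b * s c * s d]` vanishes
unless the four indices pair up. Here `tr A = ‖f‖₂²` for every `h`, which gives the mean, and
the average of `Σ_{a ≠ b} f a² f b² [h a = h b]` over a pairwise independent `h` is
`(‖f‖₂⁴ - ‖f‖₄⁴) / k`, which gives the variance.
-/

open Finset
open scoped Classical

namespace Countsketch

variable {Ω : Type*} [Fintype Ω]

section Expectation

variable (w : Ω → ℝ)

noncomputable def expectation (Y : Ω → ℝ) : ℝ := ∑ ω, w ω * Y ω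

noncomputable def probability (P : Ω → Prop) : ℝ := ∑ ω with P ω, w ω

variable {w}

theorem expectation_sum {ι : Type*} (s : Finset ι) (Y : ι → Ω → ℝ) :
    expectation w (fun ω => ∑ i ∈ s, Y i ω) = ∑ i ∈ s, expectation w (Y i) := by
  simp only [expectation, mul_sum]
  exact sum_comm

theorem expectation_const_mul (c : ℝ) (Y : Ω → ℝ) :
    expectation w (fun ω => c * Y ω) = c * expectation w Y := by
  simp only [expectation, mul_sum]
  exact sum_congr rfl fun ω _ => by ring

theorem expectation_add (X Y : Ω → ℝ) :
    expectation w (fun ω => X ω + Y ω) = expectation w X + expectation w Y := by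
  simp only [expectation, mul_add, sum_add_distrib]

theorem expectation_sub (X Y : Ω → ℝ) :
    expectation w (fun ω => X ω - Y ω) = expectation w X - expectation w Y := by
  simp only [expectation, mul_sub, sum_sub_distrib]

theorem expectation_const (hw : ∑ ω, w ω = 1) (c : ℝ) : expectation w (fun _ => c) = c := by
  rw [expectation, ← sum_mul, hw, one_mul]

theorem expectation_indicator (P : Ω → Prop) :
    expectation w (fun ω => if P ω then 1 else 0) = probability w P := by
  simp [expectation, probability, sum_filter]

theorem expectation_comp {α : Type*} [Fintype α] (π : Ω → α) (X : α → ℝ) :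
    expectation w (fun ω => X (π ω)) = ∑ x, X x * probability w (fun ω => π ω = x) := by
  simp only [expectation, probability, mul_sum]
  rw [← sum_fiberwise univ π]
  refine sum_congr rfl fun x _ => sum_congr rfl fun ω hω => ?_
  rw [(mem_filter.1 hω).2, mul_comm]

end Expectation

theorem expectation_eq_iterated {α β : Type*} [Fintype α] [Fintype β] {w : α × β → ℝ}
    (hindep : ∀ (A : α → Prop) (B : β → Prop), probability w (fun ω => A ω.1 ∧ B ω.2) =
      probability w (fun ω => A ω.1) * probability w (fun ω => B ω.2))
    (F : α → β → ℝ) :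
    expectation w (fun ω => F ω.1 ω.2) =
      expectation w (fun ω => expectation w (fun ω' => F ω.1 ω'.2)) := by
  calc expectation w (fun ω => F ω.1 ω.2)
      = ∑ x, ∑ y, F x y * (probability w (fun ω => ω.1 = x) *
          probability w (fun ω => ω.2 = y)) := by
        refine (expectation_comp (fun ω => ω) (fun z : α × β => F z.1 z.2)).trans ?_
        simp only [Fintype.sum_prod_type, Prod.ext_iff]
        exact sum_congr rfl fun x _ => sum_congr rfl fun y _ => by rw [hindep (· = x) (· = y)]
    _ = ∑ x, expectation w (fun ω' => F x ω'.2) * probability w (fun ω => ω.1 = x) := by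
        simp only [expectation_comp Prod.snd, sum_mul]
        exact sum_congr rfl fun x _ => sum_congr rfl fun y _ => by ring
    _ = expectation w (fun ω => expectation w (fun ω' => F ω.1 ω'.2)) :=
        (expectation_comp Prod.fst _).symm

section Uniform

variable {w : Ω → ℝ} {ι β : Type*} [Fintype β]

variable (w) in
def IsKWiseUniform (d : ℕ) (G : Ω → ι → β) : Prop :=
  ∀ T : Finset ι, T.card ≤ d → ∀ σ : ι → β,
    probability w (fun ω => ∀ i ∈ T, G ω i = σ i) = (1 / (Fintype.card β : ℝ)) ^ T.card

theorem IsKWiseUniform.mono {d d' : ℕ} {G : Ω → ι → β} (hG : IsKWiseUniform w d G)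
    (h : d' ≤ d) : IsKWiseUniform w d' G :=
  fun T hT => hG T (hT.trans h)

theorem IsKWiseUniform.sum_weight_eq_one [Nonempty β] {d : ℕ} {G : Ω → ι → β}
    (hG : IsKWiseUniform w d G) : ∑ ω, w ω = 1 := by
  simpa [probability] using hG ∅ (Nat.zero_le d) (fun _ => Classical.arbitrary β)

theorem IsKWiseUniform.probability_apply_eq_apply [Nonempty β] {H : Ω → ι → β}
    (hH : IsKWiseUniform w 2 H) (a b : ι) :
    probability w (fun ω => H ω a = H ω b) =
      if a = b then 1 else 1 / (Fintype.card β : ℝ) := by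
  rcases eq_or_ne a b with rfl | hab
  · simp [probability, hH.sum_weight_eq_one]
  have hpair : ∀ c : β, probability w (fun ω => H ω a = c ∧ H ω b = c) =
      (1 / Fintype.card β) ^ 2 := fun c => by
    simpa [card_pair hab] using hH {a, b} card_le_two (fun _ => c)
  calc probability w (fun ω => H ω a = H ω b)
      = ∑ c, probability w (fun ω => H ω a = c ∧ H ω b = c) := by
        simp only [probability, ← sum_fiberwise (univ.filter fun ω => H ω a = H ω b)
          (fun ω => H ω a), filter_filter]
        refine sum_congr rfl fun c _ => sum_congr (filter_congr fun ω _ => ?_) fun _ _ => rfl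
        constructor <;> rintro ⟨h, rfl⟩ <;> simp [h]
    _ = if a = b then 1 else 1 / (Fintype.card β : ℝ) := by
        simp only [hpair, sum_const, card_univ, nsmul_eq_mul, hab, if_false]
        field_simp

end Uniform

def boolSign (b : Bool) : ℝ := if b then 1 else -1

theorem boolSign_mul_self (b : Bool) : boolSign b * boolSign b = 1 := by
  cases b <;> norm_num [boolSign]

theorem sum_boolSign : ∑ b, boolSign b = 0 := by
  norm_num [boolSign]

section Signs

variable {w : Ω → ℝ} {ι : Type*} {G : Ω → ι → Bool}

theorem IsKWiseUniform.expectation_prod_boolSign {d : ℕ}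
    (hG : IsKWiseUniform w d G) {S : Finset ι} (hS : S.card ≤ d) :
    expectation w (fun ω => ∏ i ∈ S, boolSign (G ω i)) = if S = ∅ then 1 else 0 := by
  -- the restriction of `G ω` to `S` is uniform, so the expectation factors over `S`
  have hrestrict : ∀ τ : S → Bool,
      probability w (fun ω => (fun i : S => G ω i) = τ) = (1 / 2) ^ S.card := by
    intro τ
    have := hG S hS (fun i => if h : i ∈ S then τ ⟨i, h⟩ else false)
    simp only [Fintype.card_bool, Nat.cast_ofNat] at this
    rw [← this]
    congr! 2 with ω
    simp only [funext_iff, Subtype.forall]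
    exact forall₂_congr fun i hi => by rw [dif_pos hi]
  calc expectation w (fun ω => ∏ i ∈ S, boolSign (G ω i))
      = expectation w (fun ω => ∏ i : S, boolSign ((fun i : S => G ω i) i)) := by
        congr 1 with ω
        exact (prod_coe_sort S _).symm
    _ = (1 / 2) ^ S.card * ∏ _i : S, ∑ b, boolSign b := by
        rw [expectation_comp (fun ω (i : S) => G ω i) (fun τ => ∏ i, boolSign (τ i)),
          Fintype.prod_sum, mul_sum]
        simp only [hrestrict, mul_comm]
    _ = if S = ∅ then 1 else 0 := by
        rw [sum_boolSign, prod_const, Finset.card_univ, Fintype.card_coe]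
        split_ifs with h
        · simp [h]
        · simp [Finset.card_ne_zero.2 (Finset.nonempty_iff_ne_empty.2 h)]

theorem IsKWiseUniform.expectation_boolSign_mul
    (hG : IsKWiseUniform w 2 G) (a b : ι) :
    expectation w (fun ω => boolSign (G ω a) * boolSign (G ω b)) = if a = b then 1 else 0 := by
  rcases eq_or_ne a b with rfl | hab
  · simpa [boolSign_mul_self] using hG.expectation_prod_boolSign (S := ∅) (Nat.zero_le 2)
  · simpa [prod_pair hab, hab] using
      hG.expectation_prod_boolSign (S := {a, b}) card_le_two

theorem IsKWiseUniform.expectation_boolSign_mul_four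
    (hG : IsKWiseUniform w 4 G) (a b c d : ι) :
    expectation w (fun ω => boolSign (G ω a) * boolSign (G ω b) * boolSign (G ω c) *
        boolSign (G ω d)) =
      (if a = b ∧ c = d then 1 else 0) + (if a = c ∧ b = d then 1 else 0) +
        (if a = d ∧ b = c then 1 else 0) - 2 * (if a = b ∧ b = c ∧ c = d then 1 else 0) := by
  have reduce : ∀ x y : ι, (∀ ω, boolSign (G ω a) * boolSign (G ω b) * boolSign (G ω c) *
      boolSign (G ω d) = boolSign (G ω x) * boolSign (G ω y)) →
      expectation w (fun ω => boolSign (G ω a) * boolSign (G ω b) * boolSign (G ω c) *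
        boolSign (G ω d)) = if x = y then 1 else 0 := fun x y h => by
    simp only [h]
    exact (hG.mono (by norm_num)).expectation_boolSign_mul x y
  -- a repeated index cancels by `s² = 1`, leaving a product of two signs
  rcases eq_or_ne a b with rfl | hab
  · rw [reduce c d fun ω => by grind [boolSign_mul_self]]
    grind
  rcases eq_or_ne c d with rfl | hcd
  · rw [reduce a b fun ω => by grind [boolSign_mul_self]]
    grind
  rcases eq_or_ne a c with rfl | hac
  · rw [reduce b d fun ω => by grind [boolSign_mul_self]]
    grind
  rcases eq_or_ne a d with rfl | had
  · rw [reduce b c fun ω => by grind [boolSign_mul_self]]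
    grind
  rcases eq_or_ne b c with rfl | hbc
  · rw [reduce a d fun ω => by grind [boolSign_mul_self]]
    grind
  rcases eq_or_ne b d with rfl | hbd
  · rw [reduce a c fun ω => by grind [boolSign_mul_self]]
    grind
  have hS : ({a, b, c, d} : Finset ι).card = 4 := by
    rw [card_insert_of_notMem (by simp [hab, hac, had]), card_insert_of_notMem (by simp [hbc, hbd]),
      card_pair hcd]
  have := hG.expectation_prod_boolSign hS.le
  simp only [prod_insert (show a ∉ ({b, c, d} : Finset ι) by simp [hab, hac, had]),
    prod_insert (show b ∉ ({c, d} : Finset ι) by simp [hbc, hbd]), prod_pair hcd] at this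
  simp only [mul_assoc, this]
  grind

theorem IsKWiseUniform.expectation_quadForm_eq_trace [Fintype ι] (hG : IsKWiseUniform w 2 G)
    (A : Matrix ι ι ℝ) :
    expectation w (fun ω => ∑ a, ∑ b, A a b * (boolSign (G ω a) * boolSign (G ω b))) =
      A.trace := by
  simp only [expectation_sum, expectation_const_mul, hG.expectation_boolSign_mul]
  simp [Matrix.trace]

theorem IsKWiseUniform.expectation_quadForm_sq [Fintype ι] (hG : IsKWiseUniform w 4 G)
    {A : Matrix ι ι ℝ} (hA : A.IsSymm) :
    expectation w (fun ω => (∑ a, ∑ b, A a b * (boolSign (G ω a) * boolSign (G ω b))) ^ 2) =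
      A.trace ^ 2 + 2 * (∑ a, ∑ b, A a b ^ 2 - ∑ a, A a a ^ 2) := by
  have hsq : ∀ ω, (∑ a, ∑ b, A a b * (boolSign (G ω a) * boolSign (G ω b))) ^ 2 =
      ∑ a, ∑ c, ∑ b, ∑ d, A a b * A c d * (boolSign (G ω a) * boolSign (G ω b) *
        boolSign (G ω c) * boolSign (G ω d)) := by
    intro ω
    simp only [sq, sum_mul_sum]
    exact sum_congr rfl fun a _ => sum_congr rfl fun c _ => sum_congr rfl fun b _ =>
      sum_congr rfl fun d _ => by ring
  simp only [hsq, expectation_sum, expectation_const_mul, hG.expectation_boolSign_mul_four]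
  simp only [ite_and, mul_ite, mul_one, mul_zero, mul_sub, mul_add, sum_sub_distrib,
    sum_add_distrib, sum_ite_irrel, sum_ite_eq, mem_univ, ↓reduceIte, sum_const_zero, sum_ite_eq',
    Matrix.trace, Matrix.diag_apply]
  rw [sq (∑ i, A i i), sum_mul_sum]
  simp only [hA.apply, ← sq, ← sum_mul]
  ring

end Signs

section Buckets

variable {ι κ : Type*}

noncomputable def bucketMatrix (f : ι → ℝ) (x : ι → κ) : Matrix ι ι ℝ :=
  Matrix.of fun a b => if x a = x b then f a * f b else 0

theorem isSymm_bucketMatrix (f : ι → ℝ) (x : ι → κ) : (bucketMatrix f x).IsSymm :=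
  Matrix.IsSymm.ext fun a b => by simp only [bucketMatrix, Matrix.of_apply, eq_comm, mul_comm]

theorem trace_bucketMatrix [Fintype ι] (f : ι → ℝ) (x : ι → κ) :
    (bucketMatrix f x).trace = ∑ a, f a ^ 2 := by
  simp [Matrix.trace, bucketMatrix, sq]

theorem sum_sq_sum_filter_eq [Fintype ι] [Fintype κ] [DecidableEq κ] (x : ι → κ)
    (u : ι → ℝ) :
    ∑ j, (∑ i with x i = j, u i) ^ 2 = ∑ a, ∑ b, if x a = x b then u a * u b else 0 := by
  simp only [sum_filter, sq, sum_mul_sum]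
  rw [sum_comm]
  refine sum_congr rfl fun a _ => ?_
  rw [sum_comm]
  refine sum_congr rfl fun b _ => ?_
  simp only [ite_zero_mul_ite_zero, ite_and, sum_ite_eq, mem_univ, if_true]
  exact if_congr eq_comm rfl rfl

theorem sum_sq_sum_filter_boolSign_mul [Fintype ι] [Fintype κ] [DecidableEq κ] (f : ι → ℝ)
    (x : ι → κ) (g : ι → Bool) :
    ∑ j, (∑ i with x i = j, boolSign (g i) * f i) ^ 2 =
      ∑ a, ∑ b, bucketMatrix f x a b * (boolSign (g a) * boolSign (g b)) := by
  rw [sum_sq_sum_filter_eq]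
  refine sum_congr rfl fun a _ => sum_congr rfl fun b _ => ?_
  simp only [bucketMatrix, Matrix.of_apply]
  split_ifs <;> ring

theorem IsKWiseUniform.expectation_offDiag_sq_bucketMatrix [Fintype ι] [Fintype κ] [Nonempty κ]
    {w : Ω → ℝ} {H : Ω → ι → κ}
    (hH : IsKWiseUniform w 2 H) (f : ι → ℝ) :
    expectation w (fun ω =>
        ∑ a, ∑ b, bucketMatrix f (H ω) a b ^ 2 - ∑ a, bucketMatrix f (H ω) a a ^ 2) =
      ((∑ a, f a ^ 2) ^ 2 - ∑ a, f a ^ 4) / Fintype.card κ := by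
  have hsq : ∀ (x : ι → κ) (a b : ι),
      bucketMatrix f x a b ^ 2 = f a ^ 2 * f b ^ 2 * if x a = x b then 1 else 0 := by
    intro x a b
    simp only [bucketMatrix, Matrix.of_apply]
    split_ifs <;> ring
  have hdiag : ∀ (x : ι → κ) (a : ι), bucketMatrix f x a a ^ 2 = f a ^ 4 := fun x a => by
    simp only [bucketMatrix, Matrix.of_apply, if_true]
    ring
  have hcoll : ∀ a b : ι,
      f a ^ 2 * f b ^ 2 * (if a = b then 1 else 1 / (Fintype.card κ : ℝ)) =
      f a ^ 2 * f b ^ 2 / Fintype.card κ +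
        (1 - 1 / (Fintype.card κ : ℝ)) * if a = b then f a ^ 4 else 0 := by
    intro a b
    split_ifs with hab
    · rw [hab]; ring
    · ring
  simp only [hdiag, hsq, expectation_sub, expectation_sum, expectation_const_mul,
    expectation_indicator, hH.probability_apply_eq_apply, hcoll, sum_add_distrib, ← mul_sum,
    sum_ite_eq, mem_univ, if_true, ← sum_div, ← sum_mul, ← sq,
    expectation_const hH.sum_weight_eq_one]
  ring

end Buckets

end Countsketch

open Countsketch

/-- Moments of one row of Countsketch: with a pairwise-independent hash `h : [n] → [k]` and
4-wise independent uniform signs `g`, independent of each other,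
`E[Σ_j R_j²] = ‖f‖₂²` and `Var(Σ_j R_j²) = 2(‖f‖₂⁴ - ‖f‖₄⁴)/k`. -/
theorem stmt_7 (n k : ℕ) (hk : 0 < k) (f : Fin n → ℝ)
    (μ : PMF ((Fin n → Fin k) × (Fin n → Bool)))
    (Pr : (((Fin n → Fin k) × (Fin n → Bool)) → Prop) → ℝ)
    (hPr : ∀ P, Pr P = ∑ ω ∈ Finset.univ.filter P, (μ ω).toReal)
    (hindep : ∀ (A : (Fin n → Fin k) → Prop) (B : (Fin n → Bool) → Prop),
      Pr (fun ω => A ω.1 ∧ B ω.2) = Pr (fun ω => A ω.1) * Pr (fun ω => B ω.2))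
    (hh : ∀ (T : Finset (Fin n)), T.card ≤ 2 → ∀ σ : Fin n → Fin k,
      Pr (fun ω => ∀ i ∈ T, ω.1 i = σ i) = (1 / (k : ℝ)) ^ T.card)
    (hg : ∀ (T : Finset (Fin n)), T.card ≤ 4 → ∀ σ : Fin n → Bool,
      Pr (fun ω => ∀ i ∈ T, ω.2 i = σ i) = (1 / 2 : ℝ) ^ T.card)
    (R : ((Fin n → Fin k) × (Fin n → Bool)) → Fin k → ℝ)
    (hR : ∀ ω j, R ω j = ∑ i ∈ Finset.univ.filter (fun i => ω.1 i = j),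
      (if ω.2 i then (1:ℝ) else -1) * f i)
    (E : (((Fin n → Fin k) × (Fin n → Bool)) → ℝ) → ℝ)
    (hE : ∀ Y, E Y = ∑ ω : (Fin n → Fin k) × (Fin n → Bool), (μ ω).toReal * Y ω) :
    E (fun ω => ∑ j : Fin k, (R ω j) ^ 2) = ∑ i, (f i) ^ 2 ∧
      E (fun ω => (∑ j : Fin k, (R ω j) ^ 2) ^ 2) -
          (E (fun ω => ∑ j : Fin k, (R ω j) ^ 2)) ^ 2 =
        2 * ((∑ i, (f i) ^ 2) ^ 2 - ∑ i, (f i) ^ 4) / k := by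
  obtain rfl : Pr = probability (fun ω => (μ ω).toReal) := funext hPr
  obtain rfl : E = expectation (fun ω => (μ ω).toReal) := funext hE
  have hHash : IsKWiseUniform (fun ω => (μ ω).toReal) 2 Prod.fst :=
    fun T hT σ => by simpa using hh T hT σ
  have hSign : IsKWiseUniform (fun ω => (μ ω).toReal) 4 Prod.snd :=
    fun T hT σ => by simpa using hg T hT σ
  have : Nonempty (Fin k) := ⟨⟨0, hk⟩⟩
  have hw := hSign.sum_weight_eq_one
  have hZ : ∀ ω, ∑ j, R ω j ^ 2 =
      ∑ a, ∑ b, bucketMatrix f ω.1 a b * (boolSign (ω.2 a) * boolSign (ω.2 b)) := by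
    intro ω
    simp only [hR]
    exact sum_sq_sum_filter_boolSign_mul f ω.1 ω.2
  have hmean :
      expectation (fun ω => (μ ω).toReal) (fun ω => ∑ j, R ω j ^ 2) = ∑ i, f i ^ 2 := by
    simp only [hZ]
    rw [expectation_eq_iterated hindep (fun x y => ∑ a, ∑ b, bucketMatrix f x a b *
      (boolSign (y a) * boolSign (y b)))]
    simp only [(hSign.mono (by norm_num)).expectation_quadForm_eq_trace, trace_bucketMatrix,
      expectation_const hw]
  refine ⟨hmean, ?_⟩
  rw [hmean]
  simp only [hZ]
  rw [expectation_eq_iterated hindep (fun x y => (∑ a, ∑ b, bucketMatrix f x a b *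
      (boolSign (y a) * boolSign (y b))) ^ 2)]
  simp only [hSign.expectation_quadForm_sq (isSymm_bucketMatrix f _), trace_bucketMatrix,
    expectation_add, expectation_const_mul, expectation_const hw,
    hHash.expectation_offDiag_sq_bucketMatrix, Fintype.card_fin]
  field_simp
  ring
end

section
/- Let f and g be the final frequency vectors of two streams on universe [n], with insertion/deletion decompositions f = f⁺ − f⁻ and g = g⁺ − g⁻, and set F = f⁺ + f⁻, G = g⁺ + g⁻. Suppose each update to f is sampled independently with probability p_f and each update to g independently with probability p_g; let f', g' be the resulting (unscaled) sampled vectors, independent of each other. Then E[⟨p_f^{-1} f', p_g^{-1} g'⟩] = ⟨f, g⟩ and Var(⟨p_f^{-1} f', p_g^{-1} g'⟩) ≤ Σ_{i=1}^n ( f_i² p_g^{-1} G_i + g_i² p_f^{-1} F_i + p_f^{-1} p_g^{-1} F_i G_i ). -/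
/-!
Write `S_i = ∑_j σ_ij B_ij` and `T_i` for the sampled sums of coordinate `i` of the two streams.
All `S_i, T_k` are independent, `E S_i = p f_i` and, as `σ_ij² = 1`, `Var S_i = p (1 - p) F_i`;
likewise for `T`. Hence `E[S_i S_k] E[T_i T_k]` is the product of the four means except on the
diagonal, and `Var (∑ S_i T_i) = ∑_i (Var S_i (E T_i)² + (E S_i)² Var T_i + Var S_i Var T_i)`.
After rescaling by `(p q)⁻¹` these three terms become `(p⁻¹ - 1) F_i g_i²`, `(q⁻¹ - 1) G_i f_i²`
and `(p⁻¹ - 1) (q⁻¹ - 1) F_i G_i`, each bounded by its counterpart in the claim.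
-/

open MeasureTheory ProbabilityTheory Finset
open scoped ENNReal

theorem integral_pi_mul_comp_eval_of_ne {ι : Type*} [Fintype ι] {X : ι → Type*}
    [∀ i, MeasurableSpace (X i)] (μ : (i : ι) → Measure (X i)) [∀ i, IsProbabilityMeasure (μ i)]
    {i k : ι} (hik : i ≠ k) {φ : X i → ℝ} {ψ : X k → ℝ}
    (hφ : AEStronglyMeasurable φ (μ i)) (hψ : AEStronglyMeasurable ψ (μ k)) :
    ∫ x, φ (x i) * ψ (x k) ∂Measure.pi μ = (∫ y, φ y ∂μ i) * ∫ y, ψ y ∂μ k := by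
  have hindep : (fun x : (i : ι) → X i => x i) ⟂ᵢ[Measure.pi μ] (fun x => x k) :=
    (iIndepFun_pi (X := fun _ => id) fun _ => aemeasurable_id).indepFun hik
  rw [hindep.integral_fun_comp_mul_comp (measurable_pi_apply i).aemeasurable
    (measurable_pi_apply k).aemeasurable, integral_comp_eval hφ,
    integral_comp_eval hψ]
  · rwa [(measurePreserving_eval μ i).map_eq]
  · rwa [(measurePreserving_eval μ k).map_eq]

theorem integral_ite_pmfBernoulli_toNNReal (p : ℝ≥0∞) (h : p.toNNReal ≤ 1) :
    ∫ b, (if b then (1 : ℝ) else 0) ∂(PMF.bernoulli p.toNNReal h).toMeasure = p.toReal := by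
  simp [PMF.integral_eq_sum, PMF.bernoulli_apply, ENNReal.coe_toNNReal_eq_toReal]

theorem sum_eq_card_filter_sub_card_filter_of_sign {κ : Type*} [Fintype κ] {s : κ → ℝ}
    (hs : ∀ j, s j = 1 ∨ s j = -1) :
    ∑ j, s j = (#{j | s j = 1} : ℝ) - #{j | s j = -1} := by
  rw [card_filter, card_filter]
  push_cast
  rw [← sum_sub_distrib]
  refine sum_congr rfl fun j _ => ?_
  rcases hs j with h | h <;> norm_num [h]

theorem sum_sq_of_sign {κ : Type*} [Fintype κ] {s : κ → ℝ} (hs : ∀ j, s j = 1 ∨ s j = -1) :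
    ∑ j, s j ^ 2 = Fintype.card κ := by
  rw [Fintype.card_eq_sum_ones]
  push_cast
  refine sum_congr rfl fun j _ => ?_
  rcases hs j with h | h <;> simp [h]

def sampledSum {κ : Type*} [Fintype κ] (s : κ → ℝ) (y : κ → Bool) : ℝ :=
  ∑ j, s j * if y j then 1 else 0

section BernoulliSampling

variable {κ : Type*} [Fintype κ] {ν : Measure Bool} [IsProbabilityMeasure ν] {p : ℝ}

theorem integral_pi_ite (hν : ∫ b, (if b then (1 : ℝ) else 0) ∂ν = p) (j : κ) :
    ∫ y, (if y j then (1 : ℝ) else 0) ∂Measure.pi (fun _ : κ => ν) = p := by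
  rw [← hν]
  exact integral_comp_eval (μ := fun _ : κ => ν) (f := fun b => if b then (1 : ℝ) else 0)
    .of_discrete

theorem integral_pi_ite_mul_ite [DecidableEq κ] (hν : ∫ b, (if b then (1 : ℝ) else 0) ∂ν = p)
    (j l : κ) :
    ∫ y, (if y j then (1 : ℝ) else 0) * (if y l then 1 else 0) ∂Measure.pi (fun _ : κ => ν) =
      p ^ 2 + if j = l then p - p ^ 2 else 0 := by
  by_cases hjl : j = l
  · subst hjl
    have hidem : ∀ y : κ → Bool,
        (if y j then (1 : ℝ) else 0) * (if y j then 1 else 0) = if y j then 1 else 0 :=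
      fun y => by split_ifs <;> norm_num
    simp_rw [hidem]
    rw [integral_pi_ite hν, if_pos trivial]
    ring
  · rw [if_neg hjl, add_zero, sq, ← hν]
    exact integral_pi_mul_comp_eval_of_ne (fun _ : κ => ν) hjl
      (φ := fun b : Bool => if b then (1 : ℝ) else 0) (ψ := fun b : Bool => if b then (1 : ℝ) else 0)
      .of_discrete .of_discrete

theorem integral_sampledSum (hν : ∫ b, (if b then (1 : ℝ) else 0) ∂ν = p) (s : κ → ℝ) :
    ∫ y, sampledSum s y ∂Measure.pi (fun _ : κ => ν) = p * ∑ j, s j := by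
  simp only [sampledSum]
  rw [integral_finsetSum _ fun j _ => .of_finite, mul_sum]
  refine sum_congr rfl fun j _ => ?_
  rw [integral_const_mul, integral_pi_ite hν, mul_comm]

theorem integral_sampledSum_sq (hν : ∫ b, (if b then (1 : ℝ) else 0) ∂ν = p) (s : κ → ℝ) :
    ∫ y, sampledSum s y ^ 2 ∂Measure.pi (fun _ : κ => ν) =
      (p * ∑ j, s j) ^ 2 + (p - p ^ 2) * ∑ j, s j ^ 2 := by
  classical
  have hexpand : ∀ y, sampledSum s y ^ 2 =
      ∑ j, ∑ l, s j * s l * ((if y j then (1 : ℝ) else 0) * (if y l then 1 else 0)) := by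
    intro y
    rw [sampledSum, sq, sum_mul_sum]
    exact sum_congr rfl fun j _ => sum_congr rfl fun l _ => by ring
  simp_rw [hexpand]
  rw [integral_finsetSum _ fun j _ => .of_finite]
  simp_rw [integral_finsetSum _ fun l _ => .of_finite, integral_const_mul,
    integral_pi_ite_mul_ite hν, mul_add, sum_add_distrib, mul_ite, mul_zero, sum_ite_eq,
    mem_univ, if_true, mul_pow, sq (∑ j, s j), sum_mul_sum, mul_sum]
  congr 1
  · exact sum_congr rfl fun j _ => sum_congr rfl fun l _ => by ring
  · exact sum_congr rfl fun j _ => by ring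

end BernoulliSampling

section Blocks

variable {ι : Type*} [Fintype ι] {κ : ι → Type*} [∀ i, Fintype (κ i)] {ν : Measure Bool}
  [IsProbabilityMeasure ν] {p : ℝ}

theorem integral_sampledSum_eval (hν : ∫ b, (if b then (1 : ℝ) else 0) ∂ν = p)
    (σ : (i : ι) → κ i → ℝ) (i : ι) :
    ∫ a, sampledSum (σ i) (a i) ∂Measure.pi (fun i => Measure.pi fun _ : κ i => ν) =
      p * ∑ j, σ i j := by
  rw [← integral_sampledSum hν]
  exact integral_comp_eval (μ := fun i => Measure.pi fun _ : κ i => ν) .of_discrete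

theorem integral_sampledSum_eval_mul [DecidableEq ι]
    (hν : ∫ b, (if b then (1 : ℝ) else 0) ∂ν = p) (σ : (i : ι) → κ i → ℝ) (i k : ι) :
    ∫ a, sampledSum (σ i) (a i) * sampledSum (σ k) (a k)
        ∂Measure.pi (fun i => Measure.pi fun _ : κ i => ν) =
      (p * ∑ j, σ i j) * (p * ∑ j, σ k j) + if i = k then (p - p ^ 2) * ∑ j, σ i j ^ 2 else 0 := by
  by_cases hik : i = k
  · subst hik
    rw [if_pos rfl, ← sq, ← integral_sampledSum_sq hν]
    simp_rw [← sq]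
    exact integral_comp_eval (μ := fun i => Measure.pi fun _ : κ i => ν)
      (f := fun y => sampledSum (σ i) y ^ 2) .of_discrete
  · rw [if_neg hik, add_zero, ← integral_sampledSum hν, ← integral_sampledSum hν]
    exact integral_pi_mul_comp_eval_of_ne _ hik .of_discrete .of_discrete

theorem integral_sampledSum_eval_mul_of_sign [DecidableEq ι]
    (hν : ∫ b, (if b then (1 : ℝ) else 0) ∂ν = p) {σ : (i : ι) → κ i → ℝ}
    (hσ : ∀ i j, σ i j = 1 ∨ σ i j = -1) (i k : ι) :
    ∫ a, sampledSum (σ i) (a i) * sampledSum (σ k) (a k)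
        ∂Measure.pi (fun i => Measure.pi fun _ : κ i => ν) =
      (∫ a, sampledSum (σ i) (a i) ∂Measure.pi (fun i => Measure.pi fun _ : κ i => ν)) *
        (∫ a, sampledSum (σ k) (a k) ∂Measure.pi (fun i => Measure.pi fun _ : κ i => ν)) +
      if i = k then (p - p ^ 2) * Fintype.card (κ i) else 0 := by
  rw [integral_sampledSum_eval_mul hν, integral_sampledSum_eval hν, integral_sampledSum_eval hν,
    sum_sq_of_sign (hσ i)]

end Blocks

section TwoStreams

variable {ι α β : Type*} [Fintype ι] [MeasurableSpace α] [MeasurableSpace β] [Finite α] [Finite β]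
  [MeasurableSingletonClass α] [MeasurableSingletonClass β] {μ : Measure α} {ν : Measure β}
  [IsFiniteMeasure μ] [IsFiniteMeasure ν]

theorem integral_prod_sum_mul (S : ι → α → ℝ) (T : ι → β → ℝ) :
    ∫ ω, ∑ i, S i ω.1 * T i ω.2 ∂μ.prod ν = ∑ i, (∫ a, S i a ∂μ) * ∫ b, T i b ∂ν := by
  rw [integral_finsetSum _ fun i _ => .of_finite]
  exact sum_congr rfl fun i _ => integral_prod_mul _ _

theorem sum_sum_mul_add_ite_mul_add_ite [DecidableEq ι] (m n v w : ι → ℝ) :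
    ∑ i, ∑ k, (m i * m k + if i = k then v i else 0) * (n i * n k + if i = k then w i else 0) =
      (∑ i, m i * n i) ^ 2 + ∑ i, (v i * n i ^ 2 + m i ^ 2 * w i + v i * w i) := by
  have hterm : ∀ i k,
      (m i * m k + if i = k then v i else 0) * (n i * n k + if i = k then w i else 0) =
        m i * n i * (m k * n k) + if i = k then v i * n i ^ 2 + m i ^ 2 * w i + v i * w i else 0 := by
    intro i k
    split_ifs with hik
    · subst hik; ring
    · ring
  simp_rw [hterm, sum_add_distrib, sum_ite_eq, mem_univ, if_true]
  rw [sq, sum_mul_sum]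
  simp only [sum_add_distrib]

theorem integral_prod_sum_mul_sq_sub_sq [DecidableEq ι] (S : ι → α → ℝ) (T : ι → β → ℝ)
    (v w : ι → ℝ)
    (hS : ∀ i k, ∫ a, S i a * S k a ∂μ =
      (∫ a, S i a ∂μ) * (∫ a, S k a ∂μ) + if i = k then v i else 0)
    (hT : ∀ i k, ∫ b, T i b * T k b ∂ν =
      (∫ b, T i b ∂ν) * (∫ b, T k b ∂ν) + if i = k then w i else 0) :
    ∫ ω, (∑ i, S i ω.1 * T i ω.2) ^ 2 ∂μ.prod ν - (∫ ω, ∑ i, S i ω.1 * T i ω.2 ∂μ.prod ν) ^ 2 =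
      ∑ i, (v i * (∫ b, T i b ∂ν) ^ 2 + (∫ a, S i a ∂μ) ^ 2 * w i + v i * w i) := by
  have hexpand : ∀ ω : α × β, (∑ i, S i ω.1 * T i ω.2) ^ 2 =
      ∑ i, ∑ k, S i ω.1 * S k ω.1 * (T i ω.2 * T k ω.2) := by
    intro ω
    rw [sq, sum_mul_sum]
    exact sum_congr rfl fun i _ => sum_congr rfl fun k _ => by ring
  have hsecond : ∫ ω, (∑ i, S i ω.1 * T i ω.2) ^ 2 ∂μ.prod ν =
      ∑ i, ∑ k, (∫ a, S i a * S k a ∂μ) * ∫ b, T i b * T k b ∂ν := by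
    simp_rw [hexpand]
    rw [integral_finsetSum _ fun i _ => .of_finite]
    refine sum_congr rfl fun i _ => ?_
    rw [integral_finsetSum _ fun k _ => .of_finite]
    exact sum_congr rfl fun k _ => integral_prod_mul (fun a => S i a * S k a) fun b => T i b * T k b
  simp_rw [hsecond, integral_prod_sum_mul, hS, hT, sum_sum_mul_add_ite_mul_add_ite]
  ring

end TwoStreams

theorem rescaled_variance_terms_le {p q : ℝ} (hp0 : 0 < p) (hp1 : p ≤ 1) (hq0 : 0 < q) (hq1 : q ≤ 1)
    (a b : ℝ) {F G : ℝ} (hF : 0 ≤ F) (hG : 0 ≤ G) :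
    p⁻¹ ^ 2 * q⁻¹ ^ 2 * ((p - p ^ 2) * F * (q * b) ^ 2 + (p * a) ^ 2 * ((q - q ^ 2) * G) +
        (p - p ^ 2) * F * ((q - q ^ 2) * G)) ≤
      a ^ 2 * q⁻¹ * G + b ^ 2 * p⁻¹ * F + p⁻¹ * q⁻¹ * F * G := by
  have hexact : p⁻¹ ^ 2 * q⁻¹ ^ 2 * ((p - p ^ 2) * F * (q * b) ^ 2 +
        (p * a) ^ 2 * ((q - q ^ 2) * G) + (p - p ^ 2) * F * ((q - q ^ 2) * G)) =
      a ^ 2 * (q⁻¹ - 1) * G + b ^ 2 * (p⁻¹ - 1) * F + (p⁻¹ - 1) * (q⁻¹ - 1) * F * G := by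
    field_simp
    ring
  have hp : 1 ≤ p⁻¹ := (one_le_inv₀ hp0).mpr hp1
  have hq : 1 ≤ q⁻¹ := (one_le_inv₀ hq0).mpr hq1
  rw [hexact]
  nlinarith [mul_nonneg (sq_nonneg a) hG, mul_nonneg (sq_nonneg b) hF,
    mul_nonneg (mul_nonneg hF hG) (by linarith : (0 : ℝ) ≤ p⁻¹ + q⁻¹ - 1)]

/-- Mean and variance bound for the rescaled sampled inner product of two streams, where each
update of `f` is sampled i.i.d. with probability `p_f` and each update of `g` with
probability `p_g`, independently. -/
theorem stmt_11 (n : ℕ)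
    (fp fm gp gm : Fin n → ℕ)
    (F G : Fin n → ℕ)
    (σf : (i : Fin n) → Fin (F i) → ℝ) (σg : (i : Fin n) → Fin (G i) → ℝ)
    (hσf : ∀ i j, σf i j = 1 ∨ σf i j = -1)
    (hσg : ∀ i j, σg i j = 1 ∨ σg i j = -1)
    (hσfp : ∀ i, (Finset.univ.filter (fun j => σf i j = 1)).card = fp i)
    (hσfm : ∀ i, (Finset.univ.filter (fun j => σf i j = -1)).card = fm i)
    (hσgp : ∀ i, (Finset.univ.filter (fun j => σg i j = 1)).card = gp i)
    (hσgm : ∀ i, (Finset.univ.filter (fun j => σg i j = -1)).card = gm i)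
    (pf pg : ℝ≥0∞) (hpf1 : pf ≤ 1) (hpg1 : pg ≤ 1) (hpf0 : pf ≠ 0) (hpg0 : pg ≠ 0)
    (μ : Measure (((i : Fin n) → Fin (F i) → Bool) × ((i : Fin n) → Fin (G i) → Bool)))
    (hμ : μ = (Measure.pi (fun i => Measure.pi
          (fun _ : Fin (F i) => (PMF.bernoulli pf.toNNReal (by simpa using ENNReal.toNNReal_mono ENNReal.one_ne_top hpf1)).toMeasure))).prod
        (Measure.pi (fun i => Measure.pi
          (fun _ : Fin (G i) => (PMF.bernoulli pg.toNNReal (by simpa using ENNReal.toNNReal_mono ENNReal.one_ne_top hpg1)).toMeasure))))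
    (f g : Fin n → ℝ)
    (hf : ∀ i, f i = (fp i : ℝ) - fm i) (hg : ∀ i, g i = (gp i : ℝ) - gm i)
    (X : (((i : Fin n) → Fin (F i) → Bool) × ((i : Fin n) → Fin (G i) → Bool)) → ℝ)
    (hX : ∀ ω, X ω = (pf.toReal)⁻¹ * (pg.toReal)⁻¹ *
      ∑ i, (∑ j, σf i j * (if ω.1 i j then (1:ℝ) else 0)) *
           (∑ j, σg i j * (if ω.2 i j then (1:ℝ) else 0))) :
    (∫ ω, X ω ∂μ = ∑ i, f i * g i) ∧
    (∫ ω, (X ω) ^ 2 ∂μ - (∫ ω, X ω ∂μ) ^ 2 ≤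
      ∑ i, ((f i) ^ 2 * (pg.toReal)⁻¹ * (G i : ℝ) + (g i) ^ 2 * (pf.toReal)⁻¹ * (F i : ℝ) +
        (pf.toReal)⁻¹ * (pg.toReal)⁻¹ * (F i : ℝ) * (G i : ℝ))) := by
  have hmean_f := integral_ite_pmfBernoulli_toNNReal pf
    (by simpa using ENNReal.toNNReal_mono ENNReal.one_ne_top hpf1)
  have hmean_g := integral_ite_pmfBernoulli_toNNReal pg
    (by simpa using ENNReal.toNNReal_mono ENNReal.one_ne_top hpg1)
  set p := pf.toReal
  set q := pg.toReal
  have hp0 : 0 < p := ENNReal.toReal_pos hpf0 (ne_top_of_le_ne_top ENNReal.one_ne_top hpf1)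
  have hq0 : 0 < q := ENNReal.toReal_pos hpg0 (ne_top_of_le_ne_top ENNReal.one_ne_top hpg1)
  have hp1 : p ≤ 1 := ENNReal.toReal_le_of_le_ofReal zero_le_one (by simpa using hpf1)
  have hq1 : q ≤ 1 := ENNReal.toReal_le_of_le_ofReal zero_le_one (by simpa using hpg1)
  have hsum_f : ∀ i, ∑ j, σf i j = f i := fun i => by
    rw [sum_eq_card_filter_sub_card_filter_of_sign (hσf i), hσfp, hσfm, hf]
  have hsum_g : ∀ i, ∑ j, σg i j = g i := fun i => by
    rw [sum_eq_card_filter_sub_card_filter_of_sign (hσg i), hσgp, hσgm, hg]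
  have hS := integral_sampledSum_eval_mul_of_sign hmean_f hσf
  have hT := integral_sampledSum_eval_mul_of_sign hmean_g hσg
  simp only [Fintype.card_fin] at hS hT
  set S := fun i (a : (i : Fin n) → Fin (F i) → Bool) => sampledSum (σf i) (a i)
  set T := fun i (b : (i : Fin n) → Fin (G i) → Bool) => sampledSum (σg i) (b i)
  have hX' : X = fun ω => p⁻¹ * q⁻¹ * ∑ i, S i ω.1 * T i ω.2 := funext hX
  have hmean : ∫ ω, X ω ∂μ = ∑ i, f i * g i := by
    rw [hμ, hX', integral_const_mul, integral_prod_sum_mul, mul_sum]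
    refine sum_congr rfl fun i _ => ?_
    rw [integral_sampledSum_eval hmean_f, integral_sampledSum_eval hmean_g, hsum_f, hsum_g]
    field_simp
  refine ⟨hmean, ?_⟩
  rw [hμ, hX']
  simp only [mul_pow, integral_const_mul]
  rw [← mul_sub, integral_prod_sum_mul_sq_sub_sq S T _ _ hS hT, mul_sum]
  refine sum_le_sum fun i _ => ?_
  rw [integral_sampledSum_eval hmean_f, integral_sampledSum_eval hmean_g, hsum_f, hsum_g]
  exact rescaled_variance_terms_le hp0 hp1 hq0 hq1 _ _ (Nat.cast_nonneg _) (Nat.cast_nonneg _)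
end

section
/- Let X₁, …, X_N be i.i.d. Bernoulli(p) random variables with Np ≥ 3γ^{-3} ln(2/δ) for some γ, δ ∈ (0,1), and let I ≤ N be a fixed integer. Consider S = p^{-1} Σ_{j=1}^{I} X_j. Then Pr[ |S − I| > γN ] ≤ δ. -/
/-!
Write `T` for the number of successes among the first `I` trials, so that `S = T / p` and
`𝔼 T = I p ≤ N p`. The moment generating function of `T` is `(1 - p + p eᵗ)^I ≤ exp (I p (eᵗ - 1))`,
so the Chernoff bound at `t = log (1 ± γ)` bounds each tail of `|T - I p| > γ N p` by
`exp (-N p γ² / 3)`. Since `γ³ ≤ γ²`, the assumption on `N p` makes each tail at most `δ / 2`.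
-/

open MeasureTheory ProbabilityTheory Real
open scoped ENNReal NNReal

set_option linter.deprecated false

lemma sq_div_three_le_one_add_mul_log_one_add_sub {γ : ℝ} (h0 : 0 ≤ γ) (h1 : γ ≤ 1) :
    γ ^ 2 / 3 ≤ (1 + γ) * log (1 + γ) - γ := by
  have h := le_log_one_add_of_nonneg h0
  rw [div_le_iff₀ (by linarith)] at h
  nlinarith [mul_le_mul_of_nonneg_left h (by linarith : (0 : ℝ) ≤ 1 + γ)]

lemma sq_div_two_le_one_sub_mul_log_one_sub_add {γ : ℝ} (h0 : 0 ≤ γ) (h1 : γ < 1) :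
    γ ^ 2 / 2 ≤ (1 - γ) * log (1 - γ) + γ := by
  have hy : 0 < 1 - γ := by linarith
  -- `(y - y⁻¹) / 2 = sinh (log y) ≤ log y` for `y = 1 - γ ≤ 1`
  have h := sinh_le_self_iff.2 (log_nonpos hy.le (by linarith))
  rw [sinh_log hy] at h
  have := mul_le_mul_of_nonneg_left h hy.le
  rw [mul_div_assoc', mul_sub, mul_inv_cancel₀ hy.ne'] at this
  nlinarith

section PoissonMgfBound

variable {Ω : Type*} [MeasurableSpace Ω] {μ : Measure Ω} [IsFiniteMeasure μ] {X : Ω → ℝ}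
  {m M γ : ℝ}

lemma measureReal_ge_add_le_exp_of_mgf_le
    (hint : ∀ t, Integrable (fun ω => exp (t * X ω)) μ)
    (hmgf : ∀ t, mgf X μ t ≤ exp (m * (exp t - 1))) (hmM : m ≤ M) (hM : 0 ≤ M)
    (hγ0 : 0 ≤ γ) (hγ1 : γ ≤ 1) :
    μ.real {ω | m + γ * M ≤ X ω} ≤ exp (-(M * γ ^ 2 / 3)) := by
  set t := log (1 + γ)
  have ht : 0 ≤ t := log_nonneg (by linarith)
  have hexp : exp t = 1 + γ := exp_log (by linarith)
  have htγ : t ≤ γ := by simpa using log_le_sub_one_of_pos (by linarith : (0 : ℝ) < 1 + γ)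
  have hkey := sq_div_three_le_one_add_mul_log_one_add_sub hγ0 hγ1
  calc μ.real {ω | m + γ * M ≤ X ω}
      ≤ exp (-t * (m + γ * M)) * mgf X μ t := measure_ge_le_exp_mul_mgf _ ht (hint t)
    _ ≤ exp (-t * (m + γ * M)) * exp (m * (exp t - 1)) := by gcongr; exact hmgf t
    _ = exp (m * (γ - t) - M * γ * t) := by rw [← exp_add, hexp]; ring_nf
    _ ≤ exp (-(M * γ ^ 2 / 3)) := by
        gcongr
        nlinarith [mul_le_mul_of_nonneg_right hmM (sub_nonneg.2 htγ),
          mul_le_mul_of_nonneg_left hkey hM]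

lemma measureReal_le_sub_le_exp_of_mgf_le
    (hint : ∀ t, Integrable (fun ω => exp (t * X ω)) μ)
    (hmgf : ∀ t, mgf X μ t ≤ exp (m * (exp t - 1))) (hmM : m ≤ M) (hM : 0 ≤ M)
    (hγ0 : 0 ≤ γ) (hγ1 : γ < 1) :
    μ.real {ω | X ω ≤ m - γ * M} ≤ exp (-(M * γ ^ 2 / 2)) := by
  set t := log (1 - γ)
  have ht : t ≤ 0 := log_nonpos (by linarith) (by linarith)
  have hexp : exp t = 1 - γ := exp_log (by linarith)
  have htγ : t ≤ -γ := by simpa using log_le_sub_one_of_pos (by linarith : (0 : ℝ) < 1 - γ)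
  have hkey := sq_div_two_le_one_sub_mul_log_one_sub_add hγ0 hγ1
  calc μ.real {ω | X ω ≤ m - γ * M}
      ≤ exp (-t * (m - γ * M)) * mgf X μ t := measure_le_le_exp_mul_mgf _ ht (hint t)
    _ ≤ exp (-t * (m - γ * M)) * exp (m * (exp t - 1)) := by gcongr; exact hmgf t
    _ = exp (m * (-t - γ) + M * γ * t) := by rw [← exp_add, hexp]; ring_nf
    _ ≤ exp (-(M * γ ^ 2 / 2)) := by
        gcongr
        nlinarith [mul_le_mul_of_nonneg_right hmM (by linarith : 0 ≤ -t - γ),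
          mul_le_mul_of_nonneg_left hkey hM]

lemma measureReal_lt_abs_sub_le_of_mgf_le
    (hint : ∀ t, Integrable (fun ω => exp (t * X ω)) μ)
    (hmgf : ∀ t, mgf X μ t ≤ exp (m * (exp t - 1))) (hmM : m ≤ M) (hM : 0 ≤ M)
    (hγ0 : 0 ≤ γ) (hγ1 : γ < 1) :
    μ.real {ω | γ * M < |X ω - m|} ≤ 2 * exp (-(M * γ ^ 2 / 3)) := by
  have hsub : {ω | γ * M < |X ω - m|} ⊆ {ω | m + γ * M ≤ X ω} ∪ {ω | X ω ≤ m - γ * M} := by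
    intro ω (hω : γ * M < |X ω - m|)
    rcases lt_abs.1 hω with h | h
    exacts [.inl (by simp only [Set.mem_setOf_eq]; linarith),
      .inr (by simp only [Set.mem_setOf_eq]; linarith)]
  have hlower : exp (-(M * γ ^ 2 / 2)) ≤ exp (-(M * γ ^ 2 / 3)) := by
    have := mul_nonneg hM (sq_nonneg γ)
    exact exp_le_exp.2 (by linarith)
  calc μ.real {ω | γ * M < |X ω - m|}
      ≤ μ.real {ω | m + γ * M ≤ X ω} + μ.real {ω | X ω ≤ m - γ * M} :=
        (measureReal_mono hsub).trans (measureReal_union_le _ _)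
    _ ≤ 2 * exp (-(M * γ ^ 2 / 3)) := by
        linarith [measureReal_ge_add_le_exp_of_mgf_le hint hmgf hmM hM hγ0 hγ1.le,
          measureReal_le_sub_le_exp_of_mgf_le hint hmgf hmM hM hγ0 hγ1]

end PoissonMgfBound

lemma mgf_bernoulli_indicator {q : ℝ≥0} (hq : q ≤ 1) (t : ℝ) :
    mgf (fun b : Bool => if b then (1 : ℝ) else 0) (PMF.bernoulli q hq).toMeasure t
      = 1 - q + q * exp t := by
  rw [mgf, PMF.integral_eq_sum, Fintype.sum_bool]
  simp [PMF.bernoulli_apply, ENNReal.toReal_sub_of_le (ENNReal.coe_le_one_iff.2 hq)]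
  ring

lemma mgf_count_pi_bernoulli {ι : Type*} [Fintype ι] {q : ℝ≥0} (hq : q ≤ 1)
    (s : Finset ι) (t : ℝ) :
    mgf (fun ω : ι → Bool => ∑ j ∈ s, if ω j then (1 : ℝ) else 0)
        (Measure.pi fun _ => (PMF.bernoulli q hq).toMeasure) t
      = (1 - q + q * exp t) ^ s.card := by
  have hindep := iIndepFun_pi (μ := fun _ : ι => (PMF.bernoulli q hq).toMeasure)
    (X := fun _ (b : Bool) => if b then (1 : ℝ) else 0) fun _ => .of_discrete
  have := hindep.mgf_sum (fun _ => by fun_prop) s (t := t)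
  simp only [Finset.sum_fn] at this
  rw [this, Finset.prod_congr rfl fun j _ => ?_, Finset.prod_const]
  rw [← mgf_bernoulli_indicator hq t]
  exact integral_comp_eval (μ := fun _ : ι => (PMF.bernoulli q hq).toMeasure)
    (f := fun b : Bool => exp (t * if b then 1 else 0)) .of_discrete

lemma mgf_count_pi_bernoulli_le {ι : Type*} [Fintype ι] {q : ℝ≥0} (hq : q ≤ 1)
    (s : Finset ι) (t : ℝ) :
    mgf (fun ω : ι → Bool => ∑ j ∈ s, if ω j then (1 : ℝ) else 0)
        (Measure.pi fun _ => (PMF.bernoulli q hq).toMeasure) t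
      ≤ exp (s.card * q * (exp t - 1)) := by
  rw [mgf_count_pi_bernoulli, mul_assoc, exp_nat_mul]
  have hq1 : (q : ℝ) ≤ 1 := hq
  gcongr
  exact (add_one_le_exp _).trans_eq' (by ring)

lemma two_mul_exp_neg_mul_sq_div_three_le {γ δ M : ℝ} (hγ0 : 0 < γ) (hγ1 : γ ≤ 1) (hδ : 0 < δ) (hM : 0 ≤ M)
    (h : 3 * γ⁻¹ ^ 3 * log (2 / δ) ≤ M) :
    2 * exp (-(M * γ ^ 2 / 3)) ≤ δ := by
  have hγ3 : γ ^ 3 ≤ γ ^ 2 := pow_le_pow_of_le_one hγ0.le hγ1 (by norm_num)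
  have hL : log (2 / δ) * 3 ≤ M * γ ^ 3 :=
    calc log (2 / δ) * 3 = 3 * γ⁻¹ ^ 3 * log (2 / δ) * γ ^ 3 := by field_simp
      _ ≤ M * γ ^ 3 := by gcongr
  calc 2 * exp (-(M * γ ^ 2 / 3)) ≤ 2 * exp (-log (2 / δ)) := by
        gcongr; nlinarith [mul_le_mul_of_nonneg_left hγ3 hM]
    _ = δ := by rw [exp_neg, exp_log (by positivity)]; field_simp

/-- Sampling concentration: if `X₁, …, X_N` are i.i.d. Bernoulli(p) with
`N p ≥ 3 γ⁻³ ln(2/δ)` and `I ≤ N`, then `S = p⁻¹ Σ_{j≤I} X_j` satisfies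
`Pr[|S - I| > γ N] ≤ δ`. -/
theorem stmt_19 (N I : ℕ) (hI : I ≤ N)
    (γ δ : ℝ) (hγ : γ ∈ Set.Ioo (0:ℝ) 1) (hδ : δ ∈ Set.Ioo (0:ℝ) 1)
    (p : ℝ≥0∞) (hp1 : p ≤ 1)
    (hNp : 3 * γ⁻¹ ^ 3 * Real.log (2 / δ) ≤ (N : ℝ) * p.toReal)
    (μ : Measure (Fin N → Bool))
    (hμ : μ = Measure.pi (fun _ => (PMF.bernoulli p.toNNReal
      (by simpa using ENNReal.toNNReal_mono ENNReal.one_ne_top hp1)).toMeasure))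
    (S : (Fin N → Bool) → ℝ)
    (hS : ∀ ω, S ω = (p.toReal)⁻¹ *
      ∑ j ∈ Finset.univ.filter (fun j : Fin N => (j : ℕ) < I),
        (if ω j then (1:ℝ) else 0)) :
    μ {ω | γ * N < |S ω - I|} ≤ ENNReal.ofReal δ := by
  obtain ⟨hγ0, hγ1⟩ := hγ
  obtain ⟨hδ0, hδ1⟩ := hδ
  have : IsProbabilityMeasure μ := hμ ▸ inferInstance
  set q := p.toReal
  set T : (Fin N → Bool) → ℝ := fun ω =>
    ∑ j ∈ Finset.univ.filter (fun j : Fin N => (j : ℕ) < I), if ω j then 1 else 0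
  have hlog : 0 < log (2 / δ) := log_pos (by rw [lt_div_iff₀ hδ0]; linarith)
  have hM : 0 < N * q := lt_of_lt_of_le (by positivity) hNp
  have hq : 0 < q := pos_of_mul_pos_right hM (Nat.cast_nonneg N)
  have hmgf (t : ℝ) : mgf T μ t ≤ exp (I * q * (exp t - 1)) := by
    rw [hμ]
    refine (mgf_count_pi_bernoulli_le _ _ t).trans_eq ?_
    rw [Fin.card_filter_val_lt, min_eq_right hI]
    rfl
  have hevent : {ω | γ * N < |S ω - I|} = {ω | γ * (N * q) < |T ω - I * q|} := by
    ext ω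
    have hST : S ω - I = q⁻¹ * (T ω - I * q) := by rw [hS]; field_simp; rfl
    rw [Set.mem_setOf_eq, Set.mem_setOf_eq, hST, abs_mul, abs_of_pos (inv_pos.2 hq),
      lt_inv_mul_iff₀ hq]
    ring_nf
  rw [hevent, ← ofReal_measureReal]
  exact ENNReal.ofReal_le_ofReal <| (measureReal_lt_abs_sub_le_of_mgf_le (fun _ => .of_finite)
    hmgf (by gcongr) hM.le hγ0.le hγ1).trans
    (two_mul_exp_neg_mul_sq_div_three_le hγ0 hγ1.le hδ0 hM.le hNp)
end
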